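/- arXiv:2311.10053 — 3 statements merged into one kernel-verified Lean document; each statement's English description precedes it below -/
import Mathlib

section
/- In the setting of the Lyapunov-damped system (LD) with f convex attaining its minimum and bounded solution x, the Lyapunov energy satisfies E(t) = o(1/t), i.e., lim_{t→∞} t·E(t) = 0. In particular f(x(t)) - f* = o(1/t). -/
/-!
Along a solution `E' = -√E ‖ẋ‖² ≤ 0`: `E` is non-increasing, and once it vanishes it stays zero.
While `E > 0`, the function `Θ = -(3 + ‖x - z‖² / 2) √E - ⟪x - z, ẋ⟫` has `Θ' ≥ E`, and
`Θ ≤ ‖x - z‖ ‖ẋ‖` is bounded because `x` and `ẋ` are; hence `E` is integrable on `[t₀, ∞)`.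
A non-increasing integrable function satisfies `(t / 2) E t ≤ ∫_{t/2}^t E → 0`.
-/

open Set Filter MeasureTheory
open scoped Topology RealInnerProductSpace

theorem antitoneOn_Ici_of_hasDerivAt_nonpos {g g' : ℝ → ℝ} {a : ℝ}
    (hg : ∀ t ≥ a, HasDerivAt g (g' t) t) (hg' : ∀ t ≥ a, g' t ≤ 0) : AntitoneOn g (Ici a) :=
  antitoneOn_of_hasDerivWithinAt_nonpos (convex_Ici a)
    (fun t ht => (hg t ht).continuousAt.continuousWithinAt)
    (fun t ht => (hg t (interior_subset ht)).hasDerivWithinAt)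
    (fun t ht => hg' t (interior_subset ht))

theorem integrableOn_Ioi_of_le_hasDerivAt_of_bddAbove {g Θ Θ' : ℝ → ℝ} {a C : ℝ}
    (hgc : ContinuousOn g (Ici a)) (hg0 : ∀ t ≥ a, 0 ≤ g t)
    (hΘ : ∀ t ≥ a, HasDerivAt Θ (Θ' t) t) (hle : ∀ t ≥ a, g t ≤ Θ' t)
    (hbdd : ∀ t ≥ a, Θ t ≤ C) : IntegrableOn g (Ioi a) := by
  have hint : ∀ b, IntegrableOn g (Icc a b) := fun b =>
    (hgc.mono Icc_subset_Ici_self).integrableOn_Icc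
  refine integrableOn_Ioi_of_intervalIntegral_norm_bounded (C - Θ a) a
    (fun b => (hint b).mono_set Ioc_subset_Icc_self) tendsto_id ?_
  filter_upwards [eventually_ge_atTop a] with b hb
  calc ∫ t in a..b, ‖g t‖ = ∫ t in a..b, g t :=
        intervalIntegral.integral_congr fun t ht =>
          Real.norm_of_nonneg (hg0 t (by rw [uIcc_of_le hb] at ht; exact ht.1))
    _ ≤ Θ b - Θ a :=
        intervalIntegral.integral_le_sub_of_hasDeriv_right_of_le hb
          (fun t ht => (hΘ t ht.1).continuousAt.continuousWithinAt)
          (fun t ht => (hΘ t ht.1.le).hasDerivWithinAt) (hint b) (fun t ht => hle t ht.1.le)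
    _ ≤ C - Θ a := by linarith [hbdd b hb]

theorem tendsto_mul_of_antitoneOn_of_integrableOn {g : ℝ → ℝ} {a : ℝ}
    (hanti : AntitoneOn g (Ici a)) (hg0 : ∀ t ≥ a, 0 ≤ g t) (hint : IntegrableOn g (Ioi a)) :
    Tendsto (fun t => t * g t) atTop (𝓝 0) := by
  set F := fun b => ∫ t in a..b, g t
  have hF := intervalIntegral_tendsto_integral_Ioi a hint tendsto_id
  have htail : Tendsto (fun t => 2 * (F t - F (t / 2))) atTop (𝓝 0) := by
    simpa using ((hF.sub (hF.comp (tendsto_id.atTop_div_const two_pos))).const_mul 2)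
  have hii : ∀ b ≥ a, IntervalIntegrable g volume a b := fun b hb =>
    (hanti.mono (by rw [uIcc_of_le hb]; exact Icc_subset_Ici_self)).intervalIntegrable
  refine tendsto_of_tendsto_of_tendsto_of_le_of_le' tendsto_const_nhds htail ?_ ?_
  · filter_upwards [eventually_ge_atTop (max a 0)] with t ht
    exact mul_nonneg (le_of_max_le_right ht) (hg0 t (le_of_max_le_left ht))
  · filter_upwards [eventually_ge_atTop (max (2 * a) 0)] with t ht
    have hat : a ≤ t / 2 := by linarith [le_of_max_le_left ht]
    have hhalf : t / 2 ≤ t := by linarith [le_of_max_le_right ht]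
    have hmono : (t - t / 2) * g t ≤ ∫ s in t / 2..t, g s := by
      simpa using intervalIntegral.integral_mono_on hhalf intervalIntegrable_const
        ((hii (t / 2) hat).symm.trans (hii t (hat.trans hhalf)))
        (fun s hs => hanti (hat.trans hs.1) (hat.trans hhalf) hs.2)
    rw [← intervalIntegral.integral_interval_sub_left (hii t (hat.trans hhalf)) (hii _ hat)]
      at hmono
    linarith

theorem ConvexOn.apply_sub_le_sub_of_hasFDerivAt {E : Type*} [NormedAddCommGroup E]
    [NormedSpace ℝ E] {s : Set E} {f : E → ℝ} {f' : E →L[ℝ] ℝ} {a b : E}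
    (hconv : ConvexOn ℝ s f) (ha : a ∈ s) (hb : b ∈ s) (hf : HasFDerivAt f f' a) :
    f' (b - a) ≤ f b - f a := by
  let L : ℝ →ᵃ[ℝ] E := AffineMap.lineMap a b
  have hL : HasDerivAt (f ∘ L) (f' (b - a)) 0 :=
    hf.comp_hasDerivAt_of_eq 0 AffineMap.hasDerivAt_lineMap (by simp [L])
  simpa [slope, L] using (hconv.comp_affineMap L).le_slope_of_hasDerivAt
    (by simpa [L] using ha) (by simpa [L] using hb) one_pos hL

section DampedGradientFlow

variable {H : Type*} [NormedAddCommGroup H] [InnerProductSpace ℝ H]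
  {f : H → ℝ} {g : H} {x x' x'' : ℝ → H} {E : ℝ → ℝ} {c t : ℝ}

theorem hasDerivAt_energy_of_damped [CompleteSpace H] (hf : HasGradientAt f g (x t))
    (hx : HasDerivAt x (x' t) t) (hx' : HasDerivAt x' (x'' t) t)
    (hE : ∀ s, E s = f (x s) - c + ‖x' s‖ ^ 2 / 2) (hODE : x'' t + √(E t) • x' t + g = 0) :
    HasDerivAt E (-(√(E t) * ‖x' t‖ ^ 2)) t := by
  have hx'' : x'' t = -(√(E t) • x' t) - g := by
    linear_combination (norm := module) hODE
  have h := ((hf.hasFDerivAt.comp_hasDerivAt t hx).sub_const c).add (hx'.norm_sq.div_const 2)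
  refine (h.congr_of_eventuallyEq (.of_forall hE)).congr_deriv ?_
  simp [hx'', inner_sub_right, inner_smul_right, real_inner_comm]

/-- Along a solution the damping terms `±√E ⟪x - z, ẋ⟫` cancel in its derivative, and the
constant `3` leaves `‖ẋ‖² / 2` of the kinetic terms, enough to dominate `E` by convexity. -/
noncomputable def dampedLyapunov (z : H) (x x' : ℝ → H) (E : ℝ → ℝ) (t : ℝ) : ℝ :=
  -((3 + ‖x t - z‖ ^ 2 / 2) * √(E t)) - ⟪x t - z, x' t⟫

theorem hasDerivAt_dampedLyapunov (z : H) (hx : HasDerivAt x (x' t) t)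
    (hx' : HasDerivAt x' (x'' t) t) (hE : HasDerivAt E (-(√(E t) * ‖x' t‖ ^ 2)) t)
    (hpos : 0 < E t) (hODE : x'' t + √(E t) • x' t + g = 0) :
    HasDerivAt (dampedLyapunov z x x' E)
      ((1 + ‖x t - z‖ ^ 2 / 2) * ‖x' t‖ ^ 2 / 2 + ⟪x t - z, g⟫) t := by
  have hx'' : x'' t = -(√(E t) • x' t) - g := by
    linear_combination (norm := module) hODE
  have hxz := hx.sub_const z
  have h := ((((hxz.norm_sq.div_const 2).const_add 3).mul (hE.sqrt hpos.ne')).neg).sub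
    (hxz.inner ℝ hx')
  refine h.congr_deriv ?_
  have hsqrt : √(E t) ≠ 0 := (Real.sqrt_pos.2 hpos).ne'
  simp only [hx'', inner_sub_right, inner_neg_right, inner_smul_right,
    real_inner_self_eq_norm_sq]
  field_simp
  ring

theorem energy_le_of_convexOn [CompleteSpace H] {z : H} (hconv : ConvexOn ℝ univ f)
    (hf : HasGradientAt f g (x t)) (hE : E t = f (x t) - f z + ‖x' t‖ ^ 2 / 2) :
    E t ≤ (1 + ‖x t - z‖ ^ 2 / 2) * ‖x' t‖ ^ 2 / 2 + ⟪x t - z, g⟫ := by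
  have hgrad := hconv.apply_sub_le_sub_of_hasFDerivAt (mem_univ _) (mem_univ z) hf.hasFDerivAt
  rw [InnerProductSpace.toDual_apply_apply, ← neg_sub, inner_neg_right, real_inner_comm] at hgrad
  have : 0 ≤ ‖x t - z‖ ^ 2 / 2 * ‖x' t‖ ^ 2 / 2 := by positivity
  rw [hE]
  linarith

theorem dampedLyapunov_le {z : H} {R V : ℝ} (hR : ‖x t - z‖ ≤ R) (hV : ‖x' t‖ ≤ V) :
    dampedLyapunov z x x' E t ≤ R * V := by
  have : 0 ≤ (3 + ‖x t - z‖ ^ 2 / 2) * √(E t) := by positivity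
  have := neg_le_abs ⟪x t - z, x' t⟫
  have := abs_real_inner_le_norm (x t - z) (x' t)
  have := mul_le_mul hR hV (norm_nonneg _) ((norm_nonneg _).trans hR)
  unfold dampedLyapunov
  linarith

end DampedGradientFlow

theorem stmt_7 {H : Type*} [NormedAddCommGroup H] [InnerProductSpace ℝ H] [CompleteSpace H]
    (f : H → ℝ) (f' : H → H)
    (hf : ∀ y, HasGradientAt f (f' y) y)
    (hconv : ConvexOn ℝ univ f)
    (z : H) (hz : ∀ y, f z ≤ f y)
    (fstar : ℝ) (hfstar : fstar = f z)
    (t₀ : ℝ) (x x' x'' : ℝ → H)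
    (hx : ∀ t, HasDerivAt x (x' t) t)
    (hx' : ∀ t, HasDerivAt x' (x'' t) t)
    (E : ℝ → ℝ) (hE : ∀ t, E t = f (x t) - fstar + ‖x' t‖ ^ 2 / 2)
    (hODE : ∀ t ≥ t₀, x'' t + Real.sqrt (E t) • x' t + f' (x t) = 0)
    (hbdd : ∃ M : ℝ, ∀ t ≥ t₀, ‖x t‖ ≤ M) :
    Tendsto (fun t => t * E t) atTop (nhds 0) ∧
      Tendsto (fun t => t * (f (x t) - fstar)) atTop (nhds 0) := by
  obtain ⟨M, hM⟩ := hbdd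
  subst hfstar
  have hgap : ∀ t, 0 ≤ f (x t) - f z := fun t => sub_nonneg.2 (hz _)
  have hkin : ∀ t, ‖x' t‖ ^ 2 / 2 ≤ E t := fun t => by linarith [hE t, hgap t]
  have hE0 : ∀ t, 0 ≤ E t := fun t => le_trans (by positivity) (hkin t)
  have hEd : ∀ t ≥ t₀, HasDerivAt E (-(√(E t) * ‖x' t‖ ^ 2)) t := fun t ht =>
    hasDerivAt_energy_of_damped (hf _) (hx t) (hx' t) hE (hODE t ht)
  have hanti : AntitoneOn E (Ici t₀) :=
    antitoneOn_Ici_of_hasDerivAt_nonpos hEd fun t _ => by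
      have := mul_nonneg (Real.sqrt_nonneg (E t)) (sq_nonneg ‖x' t‖); linarith
  have hEt : Tendsto (fun t => t * E t) atTop (𝓝 0) := by
    by_cases hpos : ∀ t ≥ t₀, 0 < E t
    · refine tendsto_mul_of_antitoneOn_of_integrableOn hanti (fun t _ => hE0 t) ?_
      exact integrableOn_Ioi_of_le_hasDerivAt_of_bddAbove (C := (M + ‖z‖) * √(2 * E t₀))
        (fun t ht => (hEd t ht).continuousAt.continuousWithinAt) (fun t _ => hE0 t)
        (fun t ht =>
          hasDerivAt_dampedLyapunov z (hx t) (hx' t) (hEd t ht) (hpos t ht) (hODE t ht))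
        (fun t _ => energy_le_of_convexOn hconv (hf _) (hE t))
        (fun t ht => dampedLyapunov_le ((norm_sub_le _ _).trans (by linarith [hM t ht]))
          (Real.le_sqrt_of_sq_le (by linarith [hkin t, hanti self_mem_Ici ht ht])))
    · push Not at hpos
      obtain ⟨t₁, ht₁, hE₁⟩ := hpos
      refine tendsto_const_nhds.congr' ?_
      filter_upwards [eventually_ge_atTop t₁] with t ht
      rw [le_antisymm ((hanti ht₁ (ht₁.trans ht) ht).trans hE₁) (hE0 t), mul_zero]
  refine ⟨hEt, tendsto_of_tendsto_of_tendsto_of_le_of_le' tendsto_const_nhds hEt ?_ ?_⟩ <;>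
    filter_upwards [eventually_ge_atTop 0] with t ht
  · exact mul_nonneg ht (hgap t)
  · exact mul_le_mul_of_nonneg_left (by linarith [hE t, sq_nonneg ‖x' t‖]) ht
end

section
/- Let f : H → ℝ be convex and continuously differentiable with L-Lipschitz gradient on a real Hilbert space H. Then for all x, y ∈ H and 0 < s ≤ 1/L: f(y - s∇f(y)) ≤ f(x) + ⟨∇f(y), y - x⟩ - (s/2)‖∇f(y)‖² - (s/2)‖∇f(x) - ∇f(y)‖². -/
/-!
A gradient step with `s ≤ 1/L` decreases `f` by at least `(s/2)‖∇f(y)‖²` (descent lemma).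
For the remaining term, compare `f` at `z = x - (1/L)(∇f(x) - ∇f(y))` from both sides: convexity
bounds `f z` below by the tangent at `y`, the descent lemma bounds it above by the quadratic model
at `x`, and this choice of `z` minimises the gap, giving
`f x ≥ f y + ⟪∇f(y), x - y⟫ + (1/(2L))‖∇f(x) - ∇f(y)‖²`. Since `s/2 ≤ 1/(2L)`, the claim follows.
-/

open Set RealInnerProductSpace AffineMap

section NormedSpace

variable {E : Type*} [NormedAddCommGroup E] [NormedSpace ℝ E] {f : E → ℝ}

theorem ConvexOn.add_fderiv_le {s : Set E} {f' : E →L[ℝ] ℝ} {a b : E} (hconv : ConvexOn ℝ s f)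
    (ha : a ∈ s) (hb : b ∈ s) (hf : HasFDerivAt f f' a) :
    f a + f' (b - a) ≤ f b := by
  have hderiv : HasDerivAt (f ∘ lineMap a b) (f' (b - a)) (0 : ℝ) :=
    hf.comp_hasDerivAt_of_eq 0 hasDerivAt_lineMap (lineMap_apply_zero a b).symm
  have hslope := (hconv.comp_affineMap (lineMap a b)).le_slope_of_hasDerivAt
    (by simpa using ha) (by simpa using hb) one_pos hderiv
  simp only [slope_def_field, Function.comp_apply, lineMap_apply_zero, lineMap_apply_one,
    sub_zero, div_one] at hslope
  linarith

theorem LipschitzWith.image_le_add_fderiv_add {f' : E → E →L[ℝ] ℝ} {K : NNReal}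
    (hf : ∀ x, HasFDerivAt f (f' x) x) (hlip : LipschitzWith K f') (a b : E) :
    f b ≤ f a + f' a (b - a) + K / 2 * ‖b - a‖ ^ 2 := by
  set v := b - a
  set h : ℝ → ℝ := fun t => f (lineMap a b t) - t * f' a v - K / 2 * t ^ 2 * ‖v‖ ^ 2
  set h' : ℝ → ℝ := fun t => f' (lineMap a b t) v - f' a v - K * t * ‖v‖ ^ 2
  have hderiv : ∀ t, HasDerivAt h (h' t) t := by
    intro t
    have hpath : HasDerivAt (fun u => f (lineMap a b u)) (f' (lineMap a b t) v) t :=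
      (hf _).comp_hasDerivAt t hasDerivAt_lineMap
    exact ((hpath.sub ((hasDerivAt_id t).mul_const (f' a v))).sub
      (((hasDerivAt_pow 2 t).const_mul (K / 2 : ℝ)).mul_const (‖v‖ ^ 2))).congr_deriv (by simp only [h']; push_cast; ring)
  obtain ⟨ξ, hξ, hmvt⟩ := exists_hasDerivAt_eq_slope h h' one_pos
    (continuous_iff_continuousAt.2 fun t => (hderiv t).continuousAt).continuousOn
    fun t _ => hderiv t
  have hgap : f' (lineMap a b ξ) v - f' a v ≤ K * ξ * ‖v‖ ^ 2 :=
    calc f' (lineMap a b ξ) v - f' a v = (f' (lineMap a b ξ) - f' a) v := rfl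
      _ ≤ ‖f' (lineMap a b ξ) - f' a‖ * ‖v‖ :=
        (Real.le_norm_self _).trans (ContinuousLinearMap.le_opNorm _ _)
      _ ≤ K * (ξ * ‖v‖) * ‖v‖ := by
        gcongr
        have hdist := hlip.dist_le_mul (lineMap a b ξ) a
        rwa [dist_lineMap_left, Real.norm_of_nonneg hξ.1.le, dist_eq_norm' a b,
          dist_eq_norm] at hdist
      _ = K * ξ * ‖v‖ ^ 2 := by ring
  have hends : h 1 ≤ h 0 := by
    have hslope : h' ξ ≤ 0 := by simp only [h']; linarith
    rw [hmvt] at hslope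
    linarith
  simp only [h, lineMap_apply_zero, lineMap_apply_one] at hends
  linarith

end NormedSpace

section InnerProductSpace

variable {H : Type*} [NormedAddCommGroup H] [InnerProductSpace ℝ H] [CompleteSpace H] {f : H → ℝ}

theorem ConvexOn.add_inner_le_of_hasGradientAt {s : Set H} {g a b : H} (hconv : ConvexOn ℝ s f)
    (ha : a ∈ s) (hb : b ∈ s) (hf : HasGradientAt f g a) :
    f a + ⟪g, b - a⟫ ≤ f b := by
  simpa using hconv.add_fderiv_le ha hb hf.hasFDerivAt

variable {f' : H → H} {K : NNReal}

theorem LipschitzWith.image_le_add_inner_add (hf : ∀ x, HasGradientAt f (f' x) x)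
    (hlip : LipschitzWith K f') (a b : H) :
    f b ≤ f a + ⟪f' a, b - a⟫ + K / 2 * ‖b - a‖ ^ 2 := by
  have hlip' : LipschitzWith K (fun x => InnerProductSpace.toDual ℝ H (f' x)) := by
    have hcomp := (InnerProductSpace.toDual ℝ H).lipschitz.comp hlip
    rwa [one_mul] at hcomp
  simpa using hlip'.image_le_add_fderiv_add (fun x => (hf x).hasFDerivAt) a b

theorem LipschitzWith.image_sub_smul_le (hf : ∀ x, HasGradientAt f (f' x) x)
    (hlip : LipschitzWith K f') {s : ℝ} (hs0 : 0 ≤ s) (hsK : s * K ≤ 1) (y : H) :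
    f (y - s • f' y) ≤ f y - s / 2 * ‖f' y‖ ^ 2 := by
  have hdesc := hlip.image_le_add_inner_add hf y (y - s • f' y)
  rw [sub_sub_cancel_left, inner_neg_right, real_inner_smul_right, real_inner_self_eq_norm_sq,
    norm_neg, norm_smul, Real.norm_of_nonneg hs0] at hdesc
  nlinarith [mul_nonneg hs0 (sq_nonneg ‖f' y‖)]

theorem ConvexOn.add_inner_add_norm_sq_le (hf : ∀ x, HasGradientAt f (f' x) x)
    (hconv : ConvexOn ℝ univ f) (hlip : LipschitzWith K f') (x y : H) :
    f y + ⟪f' y, x - y⟫ + 1 / (2 * K) * ‖f' x - f' y‖ ^ 2 ≤ f x := by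
  set d := f' x - f' y
  set z := x - (1 / (K : ℝ)) • d
  have hconv_y := hconv.add_inner_le_of_hasGradientAt (mem_univ y) (mem_univ z) (hf y)
  have hdesc_x := hlip.image_le_add_inner_add hf x z
  have hzx : z - x = -((1 / (K : ℝ)) • d) := by simp only [z]; abel
  have hsplit : ⟪f' y, z - y⟫ = ⟪f' y, x - y⟫ + ⟪f' y, z - x⟫ := by
    rw [← inner_add_right]; congr 1; abel
  have hgap : ⟪f' x, z - x⟫ - ⟪f' y, z - x⟫ = -(1 / K) * ‖d‖ ^ 2 := by
    rw [← inner_sub_left, hzx, inner_neg_right, real_inner_smul_right,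
      real_inner_self_eq_norm_sq]; ring
  have hquad : K / 2 * ‖z - x‖ ^ 2 = 1 / (2 * K) * ‖d‖ ^ 2 := by
    rw [hzx, norm_neg, norm_smul, Real.norm_eq_abs, mul_pow, sq_abs]
    rcases eq_or_ne (K : ℝ) 0 with hK | hK
    · simp [hK]
    · field_simp
  linear_combination hconv_y + hdesc_x - hsplit + hgap + hquad

end InnerProductSpace

theorem stmt_12_general {H : Type*} [NormedAddCommGroup H] [InnerProductSpace ℝ H] [CompleteSpace H]
    (f : H → ℝ) (f' : H → H)
    (hf : ∀ y, HasGradientAt f (f' y) y)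
    (hconv : ConvexOn ℝ univ f)
    (L : ℝ)
    (hlip : LipschitzWith (Real.toNNReal L) f')
    (s : ℝ) (hs0 : 0 < s) (hs : s ≤ 1 / L) :
    ∀ x y : H,
      f (y - s • f' y) ≤ f x + ⟪f' y, y - x⟫ - (s / 2) * ‖f' y‖ ^ 2
        - (s / 2) * ‖f' x - f' y‖ ^ 2 := by
  intro x y
  have hL : 0 < L := one_div_pos.mp (hs0.trans_le hs)
  have hK : (Real.toNNReal L : ℝ) = L := Real.coe_toNNReal L hL.le
  have hsL : s * Real.toNNReal L ≤ 1 := by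
    rw [hK, ← le_div_iff₀ hL]
    simpa using hs
  have hstep := hlip.image_sub_smul_le hf hs0.le hsL y
  have hcoco := hconv.add_inner_add_norm_sq_le hf hlip x y
  rw [hK, ← neg_sub y x, inner_neg_right] at hcoco
  have hs2 : s / 2 * ‖f' x - f' y‖ ^ 2 ≤ 1 / (2 * L) * ‖f' x - f' y‖ ^ 2 := by
    refine mul_le_mul_of_nonneg_right ?_ (sq_nonneg _)
    calc s / 2 ≤ 1 / L / 2 := by gcongr
      _ = 1 / (2 * L) := by ring
  linarith

theorem stmt_12 {H : Type*} [NormedAddCommGroup H] [InnerProductSpace ℝ H] [CompleteSpace H]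
    (f : H → ℝ) (f' : H → H)
    (hf : ∀ y, HasGradientAt f (f' y) y)
    (hconv : ConvexOn ℝ univ f)
    (L : ℝ) (hL : 0 < L)
    (hlip : LipschitzWith (Real.toNNReal L) f')
    (s : ℝ) (hs0 : 0 < s) (hs : s ≤ 1 / L) :
    ∀ x y : H,
      f (y - s • f' y) ≤ f x + ⟪f' y, y - x⟫ - (s / 2) * ‖f' y‖ ^ 2
        - (s / 2) * ‖f' x - f' y‖ ^ 2 :=
  stmt_12_general f f' hf hconv L hlip s hs0 hs
end

section
/- Under the LYDIA iteration with 0 < s ≤ 1/L: the series Σ_k √(E_k)‖x_k - x_{k-1}‖² and Σ_k ‖∇f(x_k) - ∇f(y_k)‖² converge; moreover ‖x_k - x_{k-1}‖ → 0, f(x_k) converges, and ‖∇f(x_k)‖ → 0 as k → ∞. -/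
/-!
Write `x_k = u (k + 1)`. The descent lemma at `y_k` and the cocoercivity inequality between `x_k`
and `y_k` (usable because `s ≤ 1/L`) give the one-step inequality
`E_{k+1} ≤ E_k - β_k (2 - β_k) ‖x_k - x_{k-1}‖² / (2s) - (s/2) ‖∇f(x_k) - ∇f(y_k)‖²`.
Once `E` is non-increasing we have `β_k ≤ 1` and `√E_k = √E_0 β_k`, so both series are dominated
by the telescoping sum of `E_k - E_{k+1}`. Since `‖x_k - x_{k-1}‖² ≤ 2s E_k`, the cubes
`‖x_k - x_{k-1}‖³` are dominated by the first series, so the steps tend to `0`; then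
`f(x_k) = E_k - ‖x_k - x_{k-1}‖² / (2s) + f*` converges with `E_k`, and the iteration bounds
`s ‖∇f(y_k)‖`, hence `‖∇f(x_k)‖`, by two consecutive steps.
-/

open Set Filter
open scoped RealInnerProductSpace NNReal

section SmoothConvex

variable {H : Type*} [NormedAddCommGroup H] [InnerProductSpace ℝ H] [CompleteSpace H]
  {f : H → ℝ} {f' : H → H}

theorem HasGradientAt.hasDerivAt_add_smul {g a v : H} {t : ℝ}
    (hf : HasGradientAt f g (a + t • v)) :
    HasDerivAt (fun t : ℝ => f (a + t • v)) ⟪g, v⟫ t := by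
  have hline : HasDerivAt (fun t : ℝ => a + t • v) v t := by
    simpa using ((hasDerivAt_id t).smul_const v).const_add a
  simpa [InnerProductSpace.toDual_apply_apply, Function.comp_def] using
    hf.hasFDerivAt.comp_hasDerivAt t hline

theorem ConvexOn.add_inner_le {g a : H} (hconv : ConvexOn ℝ univ f)
    (hf : HasGradientAt f g a) (b : H) :
    f a + ⟪g, b - a⟫ ≤ f b := by
  have hline : ConvexOn ℝ univ (fun t : ℝ => f (a + t • (b - a))) := by
    have heq : (fun t : ℝ => f (a + t • (b - a))) = f ∘ AffineMap.lineMap a b := by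
      ext t; simp [AffineMap.lineMap_apply_module', add_comm]
    simpa [heq] using hconv.comp_affineMap (AffineMap.lineMap a b)
  have hslope := hline.le_slope_of_hasDerivAt (mem_univ 0) (mem_univ 1) one_pos
    (HasGradientAt.hasDerivAt_add_smul (by simpa using hf))
  simp only [slope_def_field, one_smul, add_sub_cancel, zero_smul, add_zero, sub_zero, div_one]
    at hslope
  linarith

theorem le_add_inner_add_sq_of_lipschitzWith {K : ℝ≥0} (hf : ∀ x, HasGradientAt f (f' x) x)
    (hlip : LipschitzWith K f') (a b : H) :
    f b ≤ f a + ⟪f' a, b - a⟫ + K / 2 * ‖b - a‖ ^ 2 := by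
  set v := b - a
  set h : ℝ → ℝ := fun t => f (a + t • v) - t * ⟪f' a, v⟫ - K / 2 * ‖v‖ ^ 2 * t ^ 2
  have hderiv : ∀ t, HasDerivAt h (⟪f' (a + t • v) - f' a, v⟫ - K * t * ‖v‖ ^ 2) t := fun t =>
    (((hf _).hasDerivAt_add_smul.sub (hasDerivAt_mul_const _)).sub
      ((hasDerivAt_pow 2 t).const_mul _)).congr_deriv (by rw [inner_sub_left]; ring)
  have hanti : AntitoneOn h (Ici 0) := by
    refine antitoneOn_of_hasDerivWithinAt_nonpos (convex_Ici 0)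
      (fun t _ => (hderiv t).continuousAt.continuousWithinAt)
      (fun t _ => (hderiv t).hasDerivWithinAt) fun t ht => ?_
    rw [interior_Ici, mem_Ioi] at ht
    have hcs := real_inner_le_norm (f' (a + t • v) - f' a) v
    have hK := hlip.norm_sub_le (a + t • v) a
    rw [add_sub_cancel_left, norm_smul, Real.norm_of_nonneg ht.le] at hK
    nlinarith [norm_nonneg v]
  have h01 := hanti self_mem_Ici (zero_le_one' ℝ) zero_le_one
  simp only [h, v, zero_smul, add_zero, one_smul, add_sub_cancel] at h01
  linarith

theorem ConvexOn.sq_norm_sub_div_le {K : ℝ≥0} (hconv : ConvexOn ℝ univ f)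
    (hf : ∀ x, HasGradientAt f (f' x) x) (hK : 0 < K) (hlip : LipschitzWith K f') (a b : H) :
    ‖f' a - f' b‖ ^ 2 / (2 * K) ≤ f a - f b - ⟪f' b, a - b⟫ := by
  set d := f' a - f' b
  have hK' : (0 : ℝ) < K := hK
  -- compare `f` at the gradient step `a - K⁻¹ • d` with both its upper and its lower model
  have hdescent := le_add_inner_add_sq_of_lipschitzWith hf hlip a (a - (K : ℝ)⁻¹ • d)
  have hsupport := hconv.add_inner_le (hf b) (a - (K : ℝ)⁻¹ • d)
  rw [sub_sub_cancel_left, inner_neg_right, real_inner_smul_right, norm_neg, norm_smul,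
    Real.norm_of_nonneg (inv_nonneg.mpr hK'.le)] at hdescent
  rw [sub_right_comm, inner_sub_right, real_inner_smul_right] at hsupport
  have hquad : (K : ℝ) / 2 * ((K : ℝ)⁻¹ * ‖d‖) ^ 2 = ‖d‖ ^ 2 / (2 * K) := by
    field_simp
  have hlin : (K : ℝ)⁻¹ * ⟪f' a, d⟫ - (K : ℝ)⁻¹ * ⟪f' b, d⟫ = ‖d‖ ^ 2 / K := by
    rw [← mul_sub, ← inner_sub_left, real_inner_self_eq_norm_sq, inv_mul_eq_div]
  have hhalf : ‖d‖ ^ 2 / K = 2 * (‖d‖ ^ 2 / (2 * K)) := by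
    field_simp
  linarith

theorem ConvexOn.energy_le_of_extrapolated_gradient_step {K : ℝ≥0} (hconv : ConvexOn ℝ univ f)
    (hf : ∀ x, HasGradientAt f (f' x) x) (hK : 0 < K) (hlip : LipschitzWith K f')
    {s : ℝ} (hs : 0 < s) (hsK : s * K ≤ 1) {x w y p : H} {b : ℝ}
    (hy : y = x + (1 - b) • (x - w)) (hp : p = y - s • f' y) :
    f p + ‖p - x‖ ^ 2 / (2 * s) ≤ f x + ‖x - w‖ ^ 2 / (2 * s)
      - b * (2 - b) * (‖x - w‖ ^ 2 / (2 * s)) - s / 2 * ‖f' x - f' y‖ ^ 2 := by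
  set v := x - w
  have hK' : (0 : ℝ) < K := hK
  have hdescent : f p ≤ f y - s / 2 * ‖f' y‖ ^ 2 := by
    have h := le_add_inner_add_sq_of_lipschitzWith hf hlip y p
    rw [hp] at h ⊢
    rw [sub_sub_cancel_left, inner_neg_right, real_inner_smul_right, norm_neg, norm_smul,
      Real.norm_of_nonneg hs.le, real_inner_self_eq_norm_sq] at h
    nlinarith [sq_nonneg ‖f' y‖]
  have hcoco : f y - (1 - b) * ⟪f' y, v⟫ + s / 2 * ‖f' x - f' y‖ ^ 2 ≤ f x := by
    have h := hconv.sq_norm_sub_div_le hf hK hlip x y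
    have hxy : x - y = -((1 - b) • v) := by rw [hy]; abel
    rw [hxy, inner_neg_right, real_inner_smul_right] at h
    have hsK' : s / 2 ≤ 1 / (2 * K) := by
      rw [div_le_div_iff₀ two_pos (by positivity)]
      linarith
    have := mul_le_mul_of_nonneg_right hsK' (sq_nonneg ‖f' x - f' y‖)
    rw [one_div_mul_eq_div] at this
    linarith
  have hpx : ‖p - x‖ ^ 2
      = (1 - b) ^ 2 * ‖v‖ ^ 2 - 2 * s * (1 - b) * ⟪f' y, v⟫ + s ^ 2 * ‖f' y‖ ^ 2 := by
    rw [show p - x = (1 - b) • v - s • f' y by rw [hp, hy]; abel, norm_sub_sq_real, norm_smul,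
      norm_smul, real_inner_smul_left, real_inner_smul_right, Real.norm_eq_abs,
      Real.norm_of_nonneg hs.le, mul_pow, mul_pow, sq_abs, real_inner_comm v]
    ring
  have hdiv : ‖p - x‖ ^ 2 / (2 * s) = ‖v‖ ^ 2 / (2 * s) - b * (2 - b) * (‖v‖ ^ 2 / (2 * s))
      - (1 - b) * ⟪f' y, v⟫ + s / 2 * ‖f' y‖ ^ 2 := by
    rw [hpx]
    field_simp
    ring
  linarith

end SmoothConvex

theorem norm_le_of_extrapolated_gradient_step {H : Type*} [NormedAddCommGroup H]
    [NormedSpace ℝ H] {f' : H → H} {K : ℝ≥0} (hlip : LipschitzWith K f')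
    {s : ℝ} (hs : 0 < s) {x w y p : H} {b : ℝ} (hb0 : 0 ≤ b) (hb1 : b ≤ 1)
    (hy : y = x + (1 - b) • (x - w)) (hp : p = y - s • f' y) :
    ‖f' x‖ ≤ K * ‖x - w‖ + (‖p - x‖ + ‖x - w‖) / s := by
  have hlin : ‖(1 - b) • (x - w)‖ ≤ ‖x - w‖ := by
    rw [norm_smul, Real.norm_of_nonneg (by linarith)]
    exact mul_le_of_le_one_left (norm_nonneg _) (by linarith)
  have hxy : ‖f' x - f' y‖ ≤ K * ‖x - w‖ := by
    have h := hlip.norm_sub_le x y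
    rw [show x - y = -((1 - b) • (x - w)) by rw [hy]; abel, norm_neg] at h
    exact h.trans (mul_le_mul_of_nonneg_left hlin K.2)
  have hgy : s * ‖f' y‖ ≤ ‖p - x‖ + ‖x - w‖ := by
    rw [← Real.norm_of_nonneg hs.le, ← norm_smul,
      show s • f' y = (x - p) + (1 - b) • (x - w) by rw [hp, hy]; abel, norm_sub_rev p x]
    exact (norm_add_le _ _).trans (add_le_add_right hlin _)
  calc ‖f' x‖ ≤ ‖f' x - f' y‖ + ‖f' y‖ := norm_le_norm_sub_add _ _
    _ ≤ K * ‖x - w‖ + (‖p - x‖ + ‖x - w‖) / s := by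
      gcongr
      rwa [le_div_iff₀ hs, mul_comm]

theorem summable_of_le_sub_succ {a E : ℕ → ℝ} (hE : ∀ k, 0 ≤ E k) (ha : ∀ k, 0 ≤ a k)
    (h : ∀ k, a k ≤ E k - E (k + 1)) : Summable a :=
  summable_of_sum_range_le ha fun n =>
    calc ∑ k ∈ Finset.range n, a k ≤ ∑ k ∈ Finset.range n, (E k - E (k + 1)) :=
          Finset.sum_le_sum fun k _ => h k
      _ = E 0 - E n := Finset.sum_range_sub' E n
      _ ≤ E 0 := sub_le_self _ (hE n)

theorem Antitone.sqrt_div_apply_zero_le_one {E : ℕ → ℝ} (hanti : Antitone E) (hE0 : 0 ≤ E 0)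
    (k : ℕ) : √(E k / E 0) ≤ 1 :=
  Real.sqrt_le_one.mpr (div_le_one_of_le₀ (hanti k.zero_le) hE0)

section Lyapunov

variable {E β a c : ℕ → ℝ}

theorem antitone_of_le_sub_mul_two_sub (hE0 : 0 ≤ E 0) (hβ : ∀ k, β k = √(E k / E 0))
    (ha : ∀ k, 0 ≤ a k) (hc : ∀ k, 0 ≤ c k)
    (hstep : ∀ k, E (k + 1) ≤ E k - β k * (2 - β k) * a k - c k) : Antitone E := by
  -- `β k ≤ 1` needs `E k ≤ E 0`, so monotonicity is proved by induction together with it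
  have hdecr : ∀ k, E k ≤ E 0 → E (k + 1) ≤ E k := fun k hk => by
    have hβk : β k ≤ 1 := by rw [hβ]; exact Real.sqrt_le_one.mpr (div_le_one_of_le₀ hk hE0)
    have hβ0 : 0 ≤ β k := by rw [hβ]; exact Real.sqrt_nonneg _
    nlinarith [hstep k, hc k, mul_nonneg (mul_nonneg hβ0 (by linarith : 0 ≤ 2 - β k)) (ha k)]
  have hle : ∀ k, E k ≤ E 0 := fun k => by
    induction k with
    | zero => rfl
    | succ n ih => exact (hdecr n ih).trans ih
  exact antitone_nat_of_succ_le fun k => hdecr k (hle k)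

theorem summable_of_le_sub_mul_two_sub (hE : ∀ k, 0 ≤ E k) (hβ : ∀ k, β k = √(E k / E 0))
    (ha : ∀ k, 0 ≤ a k) (hc : ∀ k, 0 ≤ c k)
    (hstep : ∀ k, E (k + 1) ≤ E k - β k * (2 - β k) * a k - c k) :
    Summable (fun k => √(E k) * a k) ∧ Summable c := by
  have hanti := antitone_of_le_sub_mul_two_sub (hE 0) hβ ha hc hstep
  have hβ1 : ∀ k, β k ≤ 1 := fun k => hβ k ▸ hanti.sqrt_div_apply_zero_le_one (hE 0) k
  have hβ0 : ∀ k, 0 ≤ β k := fun k => hβ k ▸ Real.sqrt_nonneg _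
  have hsqrt : ∀ k, √(E k) = √(E 0) * β k := fun k => by
    rcases (hE 0).eq_or_lt with h0 | h0
    · have hEk : E k = 0 := le_antisymm (h0 ▸ hanti k.zero_le) (hE k)
      rw [hEk, ← h0, Real.sqrt_zero, zero_mul]
    · rw [hβ, Real.sqrt_div (hE k), mul_div_cancel₀ _ (Real.sqrt_pos.mpr h0).ne']
  constructor
  · refine (summable_of_le_sub_succ hE (fun k => mul_nonneg (hβ0 k) (ha k)) fun k => ?_).mul_left
      (√(E 0)) |>.congr fun k => by rw [hsqrt k, mul_assoc]
    have := mul_nonneg (mul_nonneg (hβ0 k) (by linarith [hβ1 k] : 0 ≤ 1 - β k)) (ha k)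
    nlinarith [hstep k, hc k]
  · exact summable_of_le_sub_succ hE hc fun k => by
      have := mul_nonneg (mul_nonneg (hβ0 k) (by linarith [hβ1 k] : 0 ≤ 2 - β k)) (ha k)
      nlinarith [hstep k]

end Lyapunov

theorem tendsto_zero_of_summable_sqrt_mul_sq {E v : ℕ → ℝ} {C : ℝ} (hC : 0 ≤ C)
    (hv : ∀ k, 0 ≤ v k) (hvE : ∀ k, v k ^ 2 ≤ C * E k)
    (hS : Summable fun k => √(E k) * v k ^ 2) : Tendsto v atTop (nhds 0) := by
  have hcube : Tendsto (fun k => v k ^ 3) atTop (nhds 0) := by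
    refine squeeze_zero (fun k => pow_nonneg (hv k) 3) (fun k => ?_)
      (by simpa using hS.tendsto_atTop_zero.const_mul √C)
    have hvk : v k ≤ √C * √(E k) := by
      rw [← Real.sqrt_mul hC]; exact Real.le_sqrt_of_sq_le (hvE k)
    calc v k ^ 3 = v k * v k ^ 2 := by ring
      _ ≤ √C * √(E k) * v k ^ 2 := mul_le_mul_of_nonneg_right hvk (sq_nonneg _)
      _ = √C * (√(E k) * v k ^ 2) := mul_assoc _ _ _
  have hroot := hcube.rpow_const (p := ((3 : ℕ) : ℝ)⁻¹) (Or.inr (by positivity))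
  rw [Real.zero_rpow (by positivity)] at hroot
  exact hroot.congr fun k => Real.pow_rpow_inv_natCast (hv k) three_ne_zero

theorem stmt_15_general {H : Type*} [NormedAddCommGroup H] [InnerProductSpace ℝ H] [CompleteSpace H]
    (f : H → ℝ) (f' : H → H)
    (hf : ∀ y, HasGradientAt f (f' y) y)
    (hconv : ConvexOn ℝ univ f)
    (L : ℝ) (hL : 0 < L) (hlip : LipschitzWith (Real.toNNReal L) f')
    (z : H) (hz : ∀ y, f z ≤ f y) (fstar : ℝ) (hfstar : fstar = f z)
    (s : ℝ) (hs0 : 0 < s) (hs : s ≤ 1 / L)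
    (u : ℕ → H) (E β : ℕ → ℝ) (y : ℕ → H)
    (hE : ∀ k, E k = f (u (k + 1)) - fstar + ‖u (k + 1) - u k‖ ^ 2 / (2 * s))
    (hβ : ∀ k, β k = Real.sqrt (E k / E 0))
    (hy : ∀ k, y k = u (k + 1) + (1 - β k) • (u (k + 1) - u k))
    (hiter : ∀ k, u (k + 2) = y k - s • f' (y k)) :
    Summable (fun k => Real.sqrt (E k) * ‖u (k + 1) - u k‖ ^ 2) ∧
      Summable (fun k => ‖f' (u (k + 1)) - f' (y k)‖ ^ 2) ∧
      Tendsto (fun k => ‖u (k + 1) - u k‖) atTop (nhds 0) ∧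
      (∃ l : ℝ, Tendsto (fun k => f (u (k + 1))) atTop (nhds l)) ∧
      Tendsto (fun k => ‖f' (u (k + 1))‖) atTop (nhds 0) := by
  have hsK : s * Real.toNNReal L ≤ 1 := by
    rw [Real.coe_toNNReal L hL.le]; exact (le_div_iff₀ hL).mp hs
  have hgap : ∀ k, ‖u (k + 1) - u k‖ ^ 2 / (2 * s) ≤ E k := fun k => by
    rw [hE, hfstar]; linarith [hz (u (k + 1))]
  have hEnn : ∀ k, 0 ≤ E k := fun k => (by positivity : (0 : ℝ) ≤ _).trans (hgap k)
  have hstep : ∀ k, E (k + 1) ≤ E k - β k * (2 - β k) * (‖u (k + 1) - u k‖ ^ 2 / (2 * s))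
      - s / 2 * ‖f' (u (k + 1)) - f' (y k)‖ ^ 2 := fun k => by
    have h := hconv.energy_le_of_extrapolated_gradient_step hf (Real.toNNReal_pos.mpr hL) hlip
      hs0 hsK (hy k) (hiter k)
    rw [hE (k + 1), hE k, show k + 1 + 1 = k + 2 from rfl]
    linarith
  obtain ⟨hS₁, hS₂⟩ := summable_of_le_sub_mul_two_sub hEnn hβ (fun k => by positivity)
    (fun k => by positivity) hstep
  have hanti := antitone_of_le_sub_mul_two_sub (hEnn 0) hβ (fun k => by positivity)
    (fun k => by positivity) hstep
  have hS₁' : Summable fun k => √(E k) * ‖u (k + 1) - u k‖ ^ 2 :=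
    (summable_div_const_iff (a := 2 * s) (by positivity)).mp
      (by simpa only [mul_div_assoc] using hS₁)
  have hv : Tendsto (fun k => ‖u (k + 1) - u k‖) atTop (nhds 0) :=
    tendsto_zero_of_summable_sqrt_mul_sq (by positivity : 0 ≤ 2 * s) (fun k => norm_nonneg _)
      (fun k => (div_le_iff₀' (by positivity)).mp (hgap k)) hS₁'
  refine ⟨hS₁', (summable_mul_left_iff (by positivity)).mp hS₂, hv, ?_, ?_⟩
  · have hElim := tendsto_atTop_ciInf hanti ⟨0, by rintro _ ⟨k, rfl⟩; exact hEnn k⟩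
    exact ⟨_, ((hElim.sub ((hv.pow 2).div_const (2 * s))).add_const fstar).congr fun k => by
      rw [hE]; ring⟩
  · have hβ0 : ∀ k, 0 ≤ β k := fun k => hβ k ▸ Real.sqrt_nonneg _
    have hβ1 : ∀ k, β k ≤ 1 := fun k => hβ k ▸ hanti.sqrt_div_apply_zero_le_one (hEnn 0) k
    refine squeeze_zero (fun _ => norm_nonneg _) (fun k => norm_le_of_extrapolated_gradient_step
      hlip hs0 (hβ0 k) (hβ1 k) (hy k) (hiter k)) ?_
    simpa using (hv.const_mul _).add (((hv.comp (tendsto_add_atTop_nat 1)).add hv).div_const s)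

/-- LYDIA one-step decrease. Here `u k` denotes `x_{k-1}`, i.e. `u (k+1) = x_k`. -/
theorem stmt_15 {H : Type*} [NormedAddCommGroup H] [InnerProductSpace ℝ H] [CompleteSpace H]
    (f : H → ℝ) (f' : H → H)
    (hf : ∀ y, HasGradientAt f (f' y) y)
    (hconv : ConvexOn ℝ univ f)
    (L : ℝ) (hL : 0 < L) (hlip : LipschitzWith (Real.toNNReal L) f')
    (z : H) (hz : ∀ y, f z ≤ f y) (fstar : ℝ) (hfstar : fstar = f z)
    (s : ℝ) (hs0 : 0 < s) (hs : s ≤ 1 / L)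
    (u : ℕ → H) (E β : ℕ → ℝ) (y : ℕ → H)
    (hE : ∀ k, E k = f (u (k + 1)) - fstar + ‖u (k + 1) - u k‖ ^ 2 / (2 * s))
    (hE0 : 0 < E 0)
    (hβ : ∀ k, β k = Real.sqrt (E k / E 0))
    (hy : ∀ k, y k = u (k + 1) + (1 - β k) • (u (k + 1) - u k))
    (hiter : ∀ k, u (k + 2) = y k - s • f' (y k)) :
    Summable (fun k => Real.sqrt (E k) * ‖u (k + 1) - u k‖ ^ 2) ∧
      Summable (fun k => ‖f' (u (k + 1)) - f' (y k)‖ ^ 2) ∧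
      Tendsto (fun k => ‖u (k + 1) - u k‖) atTop (nhds 0) ∧
      (∃ l : ℝ, Tendsto (fun k => f (u (k + 1))) atTop (nhds l)) ∧
      Tendsto (fun k => ‖f' (u (k + 1))‖) atTop (nhds 0) :=
  stmt_15_general f f' hf hconv L hL hlip z hz fstar hfstar s hs0 hs u E β y hE hβ hy hiter
end
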